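/- arXiv:1910.14151 — 3 statements merged into one kernel-verified Lean document; each statement's English description precedes it below -/
import Mathlib

section
/- For every real ε ∈ (0,1) there is a constant C such that for all δ ∈ (0,1), the double integral ∫_0^ε ∫_0^ε r³/(s·(1 + r²(1 - log(s²)))²) dr ds is bounded by C; in particular the integral is finite. -/
open MeasureTheory Set

private noncomputable def pr1G (s : ℝ) : ℝ :=
  if s ≤ 0 then 0 else (2 * Real.sqrt (1 - 2 * Real.log s))⁻¹

private noncomputable def pr1h (s : ℝ) : ℝ :=
  1 / (2 * s * ((1 - 2 * Real.log s) * Real.sqrt (1 - 2 * Real.log s)))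

private lemma pr1_hasDerivAt {s : ℝ} (hs0 : 0 < s) (hs1 : s < 1) :
    HasDerivAt pr1G (pr1h s) s := by
  have hlog : Real.log s < 0 := Real.log_neg hs0 hs1
  have hA : (1 : ℝ) < 1 - 2 * Real.log s := by linarith
  have hA0 : (0 : ℝ) < 1 - 2 * Real.log s := by linarith
  have hsqrt : (0 : ℝ) < Real.sqrt (1 - 2 * Real.log s) := Real.sqrt_pos.2 hA0
  have hAd : HasDerivAt (fun t : ℝ => 1 - 2 * Real.log t) (-(2 * s⁻¹)) s := by
    simpa using ((Real.hasDerivAt_log hs0.ne').const_mul 2).const_sub 1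
  have hSd : HasDerivAt (fun t : ℝ => Real.sqrt (1 - 2 * Real.log t))
      (1 / (2 * Real.sqrt (1 - 2 * Real.log s)) * (-(2 * s⁻¹))) s :=
    (Real.hasDerivAt_sqrt hA0.ne').comp s hAd
  have hSd2 : HasDerivAt (fun t : ℝ => 2 * Real.sqrt (1 - 2 * Real.log t))
      (2 * (1 / (2 * Real.sqrt (1 - 2 * Real.log s)) * (-(2 * s⁻¹)))) s := hSd.const_mul 2
  have hinv : HasDerivAt (fun t : ℝ => (2 * Real.sqrt (1 - 2 * Real.log t))⁻¹)
      (-(2 * (1 / (2 * Real.sqrt (1 - 2 * Real.log s)) * (-(2 * s⁻¹)))) /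
        (2 * Real.sqrt (1 - 2 * Real.log s)) ^ 2) s := by
    exact hSd2.inv (by positivity)
  have heq : (fun t : ℝ => (2 * Real.sqrt (1 - 2 * Real.log t))⁻¹) =ᶠ[nhds s] pr1G := by
    filter_upwards [IsOpen.mem_nhds isOpen_Ioi hs0] with t ht
    simp [pr1G, not_le.2 (mem_Ioi.1 ht)]
  have := hinv.congr_of_eventuallyEq heq.symm
  refine this.congr_deriv (Eq.symm ?_)
  have hsq : Real.sqrt (1 - 2 * Real.log s) ^ 2 = 1 - 2 * Real.log s :=
    Real.sq_sqrt hA0.le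
  rw [pr1h]
  field_simp
  nlinarith [hsq, hsqrt, hs0, sq_nonneg (Real.sqrt (1 - 2 * Real.log s)), mul_pos hs0 hsqrt]

private lemma pr1h_integrable {ε : ℝ} (hε0 : 0 < ε) (hε1 : ε < 1) :
    IntegrableOn pr1h (Ioc (0:ℝ) ε) := by
  apply intervalIntegral.integrableOn_deriv_of_nonneg (g := pr1G)
  · -- ContinuousOn pr1G (Icc 0 ε)
    intro x hx
    rcases eq_or_lt_of_le hx.1 with h0 | h0
    · -- x = 0
      subst h0
      rw [← continuousWithinAt_diff_self]
      refine ContinuousWithinAt.mono (t := Ioi 0) ?_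
        (fun t ht => lt_of_le_of_ne ht.1.1 (fun h => ht.2 (mem_singleton_iff.2 h.symm)))
      unfold ContinuousWithinAt
      have hG0 : pr1G 0 = 0 := by simp [pr1G]
      rw [hG0]
      have hlog : Filter.Tendsto Real.log (nhdsWithin 0 (Ioi 0)) Filter.atBot :=
        Real.tendsto_log_nhdsGT_zero
      have h1 : Filter.Tendsto (fun t : ℝ => 2 * Real.log t) (nhdsWithin 0 (Ioi 0))
          Filter.atBot := hlog.const_mul_atBot two_pos
      have h2 : Filter.Tendsto (fun t : ℝ => 1 - 2 * Real.log t) (nhdsWithin 0 (Ioi 0))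
          Filter.atTop := by
        simpa [sub_eq_add_neg] using
          Filter.tendsto_atTop_add_const_left _ 1 (Filter.tendsto_neg_atBot_atTop.comp h1)
      have h3 : Filter.Tendsto (fun t : ℝ => (1 - 2 * Real.log t)⁻¹) (nhdsWithin 0 (Ioi 0))
          (nhds 0) := tendsto_inv_atTop_zero.comp h2
      have h4 : Filter.Tendsto (fun t : ℝ => (Real.sqrt (1 - 2 * Real.log t))⁻¹)
          (nhdsWithin 0 (Ioi 0)) (nhds 0) := by
        have := (Real.continuous_sqrt.tendsto 0).comp h3
        simpa [Function.comp_def] using this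
      have h5 : Filter.Tendsto (fun t : ℝ => (2:ℝ)⁻¹ * (Real.sqrt (1 - 2 * Real.log t))⁻¹)
          (nhdsWithin 0 (Ioi 0)) (nhds 0) := by
        simpa using h4.const_mul (2:ℝ)⁻¹
      apply h5.congr'
      filter_upwards [self_mem_nhdsWithin] with t ht
      simp only [pr1G, not_le.2 (mem_Ioi.1 ht), if_false, mul_inv]
    · -- 0 < x
      apply ContinuousAt.continuousWithinAt
      have heq : (fun t : ℝ => (2 * Real.sqrt (1 - 2 * Real.log t))⁻¹) =ᶠ[nhds x] pr1G := by
        filter_upwards [IsOpen.mem_nhds isOpen_Ioi h0] with t ht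
        simp [pr1G, not_le.2 (mem_Ioi.1 ht)]
      have hlog : Real.log x < 0 := Real.log_neg h0 (lt_of_le_of_lt hx.2 hε1)
      have : ContinuousAt (fun t : ℝ => (2 * Real.sqrt (1 - 2 * Real.log t))⁻¹) x := by
        apply ContinuousAt.inv₀
        · exact continuousAt_const.mul (Real.continuous_sqrt.continuousAt.comp
            (continuousAt_const.sub ((Real.continuousAt_log h0.ne').const_mul 2)))
        · have : (0:ℝ) < Real.sqrt (1 - 2 * Real.log x) := Real.sqrt_pos.2 (by linarith)
          positivity
      exact this.congr heq
  · intro x hx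
    exact pr1_hasDerivAt hx.1 (lt_of_lt_of_le hx.2 hε1.le)
  · intro x hx
    have hlog : Real.log x < 0 := Real.log_neg hx.1 (lt_trans hx.2 hε1)
    have hA0 : (0:ℝ) < 1 - 2 * Real.log x := by linarith
    have hS0 : (0:ℝ) < Real.sqrt (1 - 2 * Real.log x) := Real.sqrt_pos.2 hA0
    exact le_of_lt (div_pos one_pos
      (mul_pos (mul_pos two_pos hx.1) (mul_pos hA0 hS0)))

theorem poincare_repl1 (ε : ℝ) (hε0 : 0 < ε) (hε1 : ε < 1) :
    ∃ C : ℝ, ∀ δ : ℝ, 0 < δ → δ < 1 →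
      IntegrableOn
        (fun p : ℝ × ℝ => p.1 ^ 3 / (p.2 * (1 + p.1 ^ 2 * (1 - Real.log (p.2 ^ 2))) ^ 2))
        (Ioc (0:ℝ) ε ×ˢ Ioc (0:ℝ) ε) volume ∧
      (∫ p in Ioc (0:ℝ) ε ×ˢ Ioc (0:ℝ) ε,
          p.1 ^ 3 / (p.2 * (1 + p.1 ^ 2 * (1 - Real.log (p.2 ^ 2))) ^ 2)) ≤ C := by
  have hmeas : MeasurableSet (Ioc (0:ℝ) ε ×ˢ Ioc (0:ℝ) ε) :=
    measurableSet_Ioc.prod measurableSet_Ioc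
  have hfm : Measurable (fun p : ℝ × ℝ =>
      p.1 ^ 3 / (p.2 * (1 + p.1 ^ 2 * (1 - Real.log (p.2 ^ 2))) ^ 2)) := by
    apply Measurable.div
    · fun_prop
    · apply Measurable.mul measurable_snd
      apply Measurable.pow_const
      apply Measurable.add measurable_const
      exact (measurable_fst.pow_const 2).mul
        (measurable_const.sub (Real.measurable_log.comp (measurable_snd.pow_const 2)))
  -- pointwise bound
  have hbound : ∀ p : ℝ × ℝ, p ∈ Ioc (0:ℝ) ε ×ˢ Ioc (0:ℝ) ε →
      ‖p.1 ^ 3 / (p.2 * (1 + p.1 ^ 2 * (1 - Real.log (p.2 ^ 2))) ^ 2)‖ ≤ (1:ℝ) * pr1h p.2 := by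
    rintro ⟨r, s⟩ ⟨⟨hr0, hrε⟩, ⟨hs0, hsε⟩⟩
    have hs1 : s < 1 := lt_of_le_of_lt hsε hε1
    have hr1 : r < 1 := lt_of_le_of_lt hrε hε1
    have hlogsq : Real.log (s ^ 2) = 2 * Real.log s := by
      rw [Real.log_pow]; push_cast; ring
    have hlog : Real.log s < 0 := Real.log_neg hs0 hs1
    set A : ℝ := 1 - 2 * Real.log s with hA_def
    have hA1 : (1:ℝ) < A := by simp only [hA_def]; linarith
    have hA0 : (0:ℝ) < A := by linarith
    have hsq : Real.sqrt A ^ 2 = A := Real.sq_sqrt hA0.le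
    have hsqrt1 : (1:ℝ) ≤ Real.sqrt A := by
      nlinarith [Real.sqrt_nonneg A]
    set D : ℝ := 1 + r ^ 2 * A with hD_def
    have hD1 : 2 * r * Real.sqrt A ≤ D := by
      nlinarith [sq_nonneg (1 - r * Real.sqrt A)]
    have hD2 : r ^ 2 * A ≤ D := by simp only [hD_def]; linarith
    have hD0 : (0:ℝ) < D := by positivity
    have key : 2 * r ^ 3 * (A * Real.sqrt A) ≤ D ^ 2 := by
      nlinarith [mul_le_mul hD1 hD2 (by positivity) hD0.le]
    have hfs : 1 - Real.log (s ^ 2) = A := by rw [hlogsq]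
    simp only [hfs]
    rw [one_mul, pr1h, Real.norm_of_nonneg (by positivity)]
    rw [div_le_div_iff₀ (by positivity) (by positivity)]
    calc r ^ 3 * (2 * s * (A * Real.sqrt A)) = s * (2 * r ^ 3 * (A * Real.sqrt A)) := by ring
      _ ≤ s * D ^ 2 := mul_le_mul_of_nonneg_left key hs0.le
      _ = 1 * (s * D ^ 2) := by ring
  have hint : IntegrableOn
      (fun p : ℝ × ℝ => p.1 ^ 3 / (p.2 * (1 + p.1 ^ 2 * (1 - Real.log (p.2 ^ 2))) ^ 2))
      (Ioc (0:ℝ) ε ×ˢ Ioc (0:ℝ) ε) volume := by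
    have hg : Integrable (fun z : ℝ × ℝ => (fun _ : ℝ => (1:ℝ)) z.1 * pr1h z.2)
        ((volume.restrict (Ioc (0:ℝ) ε)).prod (volume.restrict (Ioc (0:ℝ) ε))) := by
      have h1 : Integrable (fun _ : ℝ => (1:ℝ)) (volume.restrict (Ioc (0:ℝ) ε)) := by
        rw [integrable_const_iff]
        right
        exact isFiniteMeasure_restrict.2 (by simp [Real.volume_Ioc])
      exact Integrable.mul_prod h1 (pr1h_integrable hε0 hε1)
    rw [Measure.prod_restrict, ← Measure.volume_eq_prod] at hg
    apply Integrable.mono' hg (hfm.aestronglyMeasurable.restrict)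
    rw [ae_restrict_iff' hmeas]
    exact Filter.Eventually.of_forall hbound
  exact ⟨_, fun δ _ _ => ⟨hint, le_refl _⟩⟩
end

section
/- There is no constant C > 0 such that for all (t, x) ∈ (0,1)×(0,1) the inequality t(1 - log(x²))/(1 + t²(1 - log(x²))) ≤ C^{1/2}/(t·|log(t²)|) holds. -/
/-!
Along the curve `1 - log (x ^ 2) = t⁻²` the left-hand side equals `1 / (2t)`, so the inequality
would force `|log (t ^ 2)| ≤ 2 √C` for all `t ∈ (0, 1)`, which fails as `t → 0`.
-/

open Real Set

lemma exists_mem_Ioo_one_sub_log_sq_eq {u : ℝ} (hu : 1 < u) :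
    ∃ x ∈ Ioo (0 : ℝ) 1, 1 - log (x ^ 2) = u := by
  refine ⟨exp ((1 - u) / 2), ⟨exp_pos _, exp_lt_one_iff.mpr (by linarith)⟩, ?_⟩
  rw [log_pow, log_exp]
  push_cast
  ring

lemma exists_mem_Ioo_lt_abs_log_sq (M : ℝ) : ∃ t ∈ Ioo (0 : ℝ) 1, M < |log (t ^ 2)| := by
  have hM : 0 < |M| + 1 := by positivity
  refine ⟨exp (-(|M| + 1)), ⟨exp_pos _, exp_lt_one_iff.mpr (by linarith)⟩, ?_⟩
  rw [log_pow, log_exp, abs_of_neg (by push_cast; linarith)]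
  push_cast
  linarith [le_abs_self M]

lemma mul_inv_sq_div_one_add_sq_mul_inv_sq {t : ℝ} (ht : t ≠ 0) :
    t * (t ^ 2)⁻¹ / (1 + t ^ 2 * (t ^ 2)⁻¹) = (2 * t)⁻¹ := by
  field_simp
  ring

theorem not_good_metric_two_divisors :
    ¬ ∃ C : ℝ, 0 < C ∧ ∀ t x : ℝ, t ∈ Set.Ioo (0:ℝ) 1 → x ∈ Set.Ioo (0:ℝ) 1 →
      t * (1 - Real.log (x ^ 2)) / (1 + t ^ 2 * (1 - Real.log (x ^ 2))) ≤
        Real.sqrt C / (t * |Real.log (t ^ 2)|) := by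
  rintro ⟨C, -, hbound⟩
  obtain ⟨t, ht, hlog⟩ := exists_mem_Ioo_lt_abs_log_sq (2 * √C)
  have ht0 : 0 < t := ht.1
  have hlog_pos : 0 < |log (t ^ 2)| := by linarith [sqrt_nonneg C]
  have ht_inv : 1 < (t ^ 2)⁻¹ :=
    one_lt_inv₀ (by positivity) |>.mpr (pow_lt_one₀ ht0.le ht.2 two_ne_zero)
  obtain ⟨x, hx, hux⟩ := exists_mem_Ioo_one_sub_log_sq_eq ht_inv
  have key := hbound t x ht hx
  rw [hux, mul_inv_sq_div_one_add_sq_mul_inv_sq ht0.ne', ← one_div,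
    div_le_div_iff₀ (by positivity) (by positivity)] at key
  nlinarith
end

section
/- There is no constant C > 0 such that for all (t, x) ∈ (0,1)×(0,1) one has t(1 - log(x²))/(1 + t²(1 - log(x²))) ≤ C^{1/2}. -/
/-!
Write `s = 1 - log (x²)`; as `x` ranges over `(0, 1)`, `s` takes every value in `(1, ∞)`.
Choosing `s = t⁻²` (possible for `t ∈ (0, 1)`) makes the ratio `t s / (1 + t² s)` equal to `(2t)⁻¹`,
which exceeds any given bound once `t` is small.
-/

open Real Set

lemma exists_mem_Ioo_log_sq_eq {a : ℝ} (ha : a < 0) :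
    ∃ x ∈ Ioo (0 : ℝ) 1, log (x ^ 2) = a := by
  refine ⟨exp (a / 2), ⟨exp_pos _, exp_lt_one_iff.mpr (by linarith)⟩, ?_⟩
  rw [← exp_nat_mul, log_exp]
  ring

lemma one_lt_inv_sq {t : ℝ} (ht : t ∈ Ioo (0 : ℝ) 1) : 1 < (t ^ 2)⁻¹ :=
  one_lt_inv_iff₀.mpr ⟨pow_pos ht.1 2, pow_lt_one₀ ht.1.le ht.2 two_ne_zero⟩

theorem not_good_metric_one_divisor :
    ¬ ∃ C : ℝ, 0 < C ∧ ∀ t x : ℝ, t ∈ Set.Ioo (0:ℝ) 1 → x ∈ Set.Ioo (0:ℝ) 1 →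
      t * (1 - Real.log (x ^ 2)) / (1 + t ^ 2 * (1 - Real.log (x ^ 2))) ≤
        Real.sqrt C := by
  rintro ⟨C, -, hC⟩
  set t : ℝ := (2 * (√C + 1))⁻¹ -- so that `(2t)⁻¹ = √C + 1`
  have hsqrt := sqrt_nonneg C
  have ht : t ∈ Ioo (0 : ℝ) 1 :=
    ⟨by positivity, inv_lt_one_of_one_lt₀ (by linarith)⟩
  obtain ⟨x, hx, hlog⟩ := exists_mem_Ioo_log_sq_eq (sub_neg.mpr (one_lt_inv_sq ht))
  have hbound := hC t x ht hx
  rw [hlog, sub_sub_cancel, mul_inv_sq_div_one_add_sq_mul_inv_sq ht.1.ne', mul_inv_rev,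
    inv_inv] at hbound
  linarith
end
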